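/- arXiv:2209.10222 — 3 statements merged into one kernel-verified Lean document; each statement's English description precedes it below -/
import Mathlib

section
/- If random variables Y and X^{(z)} are conditionally independent given Z (where Z takes finitely many values), then the conditional distribution p(Y | X^{(z)}) equals p(Y | T(X^{(z)})) where T(x) = p_Z(·|X^{(z)}=x) is the posterior distribution of Z given X^{(z)}; i.e., the posterior of Z is a sufficient statistic of X^{(z)} for inferring Y. -/
open Finset

noncomputable def prob {Ω : Type*} [Fintype Ω] (p : Ω → ℝ) (A : Set Ω) : ℝ :=
  ∑ ω, A.indicator p ω

noncomputable def cprob {Ω : Type*} [Fintype Ω] (p : Ω → ℝ) (A B : Set Ω) : ℝ :=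
  prob p (A ∩ B) / prob p B

/-!
Conditional independence gives the law of total probability through the posterior:
`p(Y = y | X = x') = ∑ z, p(Y = y | Z = z) * T x' z`, so `p(Y = y, X = x') = f (T x') * p(X = x')`
for a function `f` of the posterior alone. Summing this over the fibre `{x' | T x' = T x}` of `T`
shows that conditioning on `T X = T x` gives the same value `f (T x)`.
-/

section FiniteProbability

variable {Ω : Type*} [Fintype Ω] {p : Ω → ℝ}

lemma prob_nonneg (hp : ∀ ω, 0 ≤ p ω) (A : Set Ω) : 0 ≤ prob p A :=
  Finset.sum_nonneg fun ω _ => Set.indicator_nonneg (fun ω _ => hp ω) ω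

lemma prob_mono (hp : ∀ ω, 0 ≤ p ω) {A B : Set Ω} (h : A ⊆ B) : prob p A ≤ prob p B :=
  Finset.sum_le_sum fun ω _ => Set.indicator_le_indicator_of_subset h hp ω

lemma prob_eq_zero_of_subset (hp : ∀ ω, 0 ≤ p ω) {A B : Set Ω} (h : A ⊆ B)
    (hB : ¬ 0 < prob p B) : prob p A = 0 :=
  le_antisymm ((prob_mono hp h).trans (not_lt.mp hB)) (prob_nonneg hp A)

lemma prob_eq_sum_inter_fiber {α : Type*} [Fintype α] (p : Ω → ℝ) (A : Set Ω) (g : Ω → α) :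
    prob p A = ∑ a, prob p (A ∩ {ω | g ω = a}) := by
  classical
  unfold prob
  rw [Finset.sum_comm]
  refine Finset.sum_congr rfl fun ω _ => ?_
  by_cases hA : ω ∈ A <;> simp [Set.indicator_apply, hA]

lemma cprob_mul_prob (p : Ω → ℝ) (A : Set Ω) {B : Set Ω} (hB : prob p B ≠ 0) :
    cprob p A B * prob p B = prob p (A ∩ B) :=
  div_mul_cancel₀ _ hB

lemma cprob_eq_of_prob_inter_eq_mul {A B : Set Ω} {c : ℝ} (hB : 0 < prob p B)
    (h : prob p (A ∩ B) = c * prob p B) : cprob p A B = c := by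
  rw [cprob, h, mul_div_cancel_right₀ _ hB.ne']

lemma prob_inter_preimage_eq_mul {α : Type*} [Fintype α] (p : Ω → ℝ) (A : Set Ω) (X : Ω → α)
    (S : Set α) (c : ℝ) (h : ∀ a ∈ S, prob p (A ∩ {ω | X ω = a}) = c * prob p {ω | X ω = a}) :
    prob p (A ∩ X ⁻¹' S) = c * prob p (X ⁻¹' S) := by
  rw [prob_eq_sum_inter_fiber p _ X, prob_eq_sum_inter_fiber p (X ⁻¹' S) X, Finset.mul_sum]
  refine Finset.sum_congr rfl fun a _ => ?_
  by_cases ha : a ∈ S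
  · have hA : A ∩ X ⁻¹' S ∩ {ω | X ω = a} = A ∩ {ω | X ω = a} := by
      ext ω
      simp only [Set.mem_inter_iff, Set.mem_preimage, Set.mem_ofPred_eq]
      constructor
      · rintro ⟨⟨hω, -⟩, rfl⟩
        exact ⟨hω, rfl⟩
      · rintro ⟨hω, rfl⟩
        exact ⟨⟨hω, ha⟩, rfl⟩
    rw [hA, h a ha, Set.inter_eq_right.mpr]
    rintro ω rfl
    exact ha
  · have hempty : ∀ B : Set Ω, B ∩ X ⁻¹' S ∩ {ω | X ω = a} = ∅ := by
      rintro B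
      ext ω
      simp only [Set.mem_inter_iff, Set.mem_preimage, Set.mem_ofPred_eq, Set.mem_empty_iff_false,
        iff_false]
      rintro ⟨⟨-, hω⟩, rfl⟩
      exact ha hω
    rw [hempty, ← Set.univ_inter (X ⁻¹' S), hempty]
    simp [prob]

variable {𝒵 : Type*} [Fintype 𝒵]

lemma prob_inter_eq_sum_of_condIndep (hp : ∀ ω, 0 ≤ p ω) (A B : Set Ω) (Z : Ω → 𝒵)
    (hCI : ∀ z, 0 < prob p {ω | Z ω = z} →
      cprob p (A ∩ B) {ω | Z ω = z} = cprob p A {ω | Z ω = z} * cprob p B {ω | Z ω = z}) :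
    prob p (A ∩ B) = ∑ z, cprob p A {ω | Z ω = z} * prob p ({ω | Z ω = z} ∩ B) := by
  rw [prob_eq_sum_inter_fiber p (A ∩ B) Z]
  refine Finset.sum_congr rfl fun z _ => ?_
  by_cases hz : 0 < prob p {ω | Z ω = z}
  · rw [← cprob_mul_prob p _ hz.ne', hCI z hz, mul_assoc, cprob_mul_prob p _ hz.ne',
      Set.inter_comm B]
  · rw [prob_eq_zero_of_subset hp Set.inter_subset_right hz,
      prob_eq_zero_of_subset hp Set.inter_subset_left hz, mul_zero]

lemma prob_inter_eq_sum_posterior_mul (hp : ∀ ω, 0 ≤ p ω) (A B : Set Ω) (Z : Ω → 𝒵)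
    (hCI : ∀ z, 0 < prob p {ω | Z ω = z} →
      cprob p (A ∩ B) {ω | Z ω = z} = cprob p A {ω | Z ω = z} * cprob p B {ω | Z ω = z}) :
    prob p (A ∩ B) = (∑ z, cprob p A {ω | Z ω = z} * cprob p {ω | Z ω = z} B) * prob p B := by
  by_cases hB : 0 < prob p B
  · rw [prob_inter_eq_sum_of_condIndep hp A B Z hCI, Finset.sum_mul]
    simp only [mul_assoc, cprob_mul_prob p _ hB.ne']
  · rw [prob_eq_zero_of_subset hp Set.inter_subset_right hB,
      prob_eq_zero_of_subset hp subset_rfl hB, mul_zero]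

end FiniteProbability

theorem stmt0_general {Ω 𝒴 𝒳 𝒵 : Type*} [Fintype Ω] [Fintype 𝒳] [Fintype 𝒵]
    (p : Ω → ℝ) (hp : ∀ ω, 0 ≤ p ω)
    (Y : Ω → 𝒴) (X : Ω → 𝒳) (Z : Ω → 𝒵)
    (hCI : ∀ y x z, 0 < prob p {ω | Z ω = z} →
      cprob p {ω | Y ω = y ∧ X ω = x} {ω | Z ω = z}
        = cprob p {ω | Y ω = y} {ω | Z ω = z} * cprob p {ω | X ω = x} {ω | Z ω = z})
    (T : 𝒳 → 𝒵 → ℝ)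
    (hT : ∀ x z, T x z = cprob p {ω | Z ω = z} {ω | X ω = x}) :
    ∀ y x, 0 < prob p {ω | X ω = x} →
      cprob p {ω | Y ω = y} {ω | X ω = x}
        = cprob p {ω | Y ω = y} {ω | T (X ω) = T x} := by
  intro y x hx
  set f : (𝒵 → ℝ) → ℝ := fun t => ∑ z, cprob p {ω | Y ω = y} {ω | Z ω = z} * t z
  have hfiber : ∀ x', prob p ({ω | Y ω = y} ∩ {ω | X ω = x'}) = f (T x') * prob p {ω | X ω = x'} :=
    fun x' => by
      simp only [f, hT]
      exact prob_inter_eq_sum_posterior_mul hp {ω | Y ω = y} {ω | X ω = x'} Z (hCI y x')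
  have hTx : 0 < prob p {ω | T (X ω) = T x} :=
    hx.trans_le (prob_mono hp fun ω (hω : X ω = x) => congrArg T hω)
  rw [cprob_eq_of_prob_inter_eq_mul hx (hfiber x), cprob_eq_of_prob_inter_eq_mul hTx
    (prob_inter_preimage_eq_mul p _ X {a | T a = T x} _ fun a (ha : T a = T x) => ha ▸ hfiber a)]

/-- If Y ⊥ X | Z, then the posterior of Z given X is a sufficient statistic of X for
inferring Y: p(Y = y | X = x) = p(Y = y | T (X) = T x), where T x = p(Z = · | X = x). -/
theorem stmt0 {Ω 𝒴 𝒳 𝒵 : Type*} [Fintype Ω] [Fintype 𝒴] [Fintype 𝒳] [Fintype 𝒵]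
    (p : Ω → ℝ) (hp : ∀ ω, 0 ≤ p ω) (hpsum : ∑ ω, p ω = 1)
    (Y : Ω → 𝒴) (X : Ω → 𝒳) (Z : Ω → 𝒵)
    (hCI : ∀ y x z, 0 < prob p {ω | Z ω = z} →
      cprob p {ω | Y ω = y ∧ X ω = x} {ω | Z ω = z}
        = cprob p {ω | Y ω = y} {ω | Z ω = z} * cprob p {ω | X ω = x} {ω | Z ω = z})
    (T : 𝒳 → 𝒵 → ℝ)
    (hT : ∀ x z, T x z = cprob p {ω | Z ω = z} {ω | X ω = x}) :
    ∀ y x, 0 < prob p {ω | X ω = x} →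
      cprob p {ω | Y ω = y} {ω | X ω = x}
        = cprob p {ω | Y ω = y} {ω | T (X ω) = T x} :=
  stmt0_general p hp Y X Z hCI T hT
end

section
/- Under the conditional i.i.d. factorization p(X_0=δ, X=x | Z=z') = p(X_0=δ|Z=z')·p(X=x|Z=z'), if r(x) := max_{z'≠z} [p(Z=z')p(X=x|Z=z')] / [p(Z=z)p(X=x|Z=z)] ≤ σ^{-1}-1 and for all z'≠z, p(X_0=δ|Z=z')/p(X_0=δ|Z=z) ≤ G[(1-ζ)^{-1}-1] with ζ defined so that (σ^{-1}-1)(K-1)G[(1-ζ)^{-1}-1] = (1-η/2)^{-1}-1, then p(Z=z | X_0=δ, X=x) ≥ 1-η/2. -/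
/-! Each competing joint weight `pZ z' · q0 z' · q1 z'` is at most `c` times the weight of `z`,
where `c = (σ⁻¹ - 1) · G((1 - ζ)⁻¹ - 1)` is the product of the two ratio bounds. Hence the sum
of all weights is at most `(1 + (K - 1) c)` times the weight of `z`, and the choice of `ζ` makes
`(1 + (K - 1) c)⁻¹ = 1 - η/2`. -/

open Finset

theorem mul_le_mul_mul_of_div_le_of_div_le {K : Type*} [Field K] [LinearOrder K]
    [IsStrictOrderedRing K] {a b x y α β : K} (ha : 0 ≤ a) (hb : 0 ≤ b) (hx : 0 < x) (hy : 0 < y)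
    (hax : a / x ≤ α) (hby : b / y ≤ β) : a * b ≤ α * β * (x * y) := by
  have hα : a ≤ α * x := (div_le_iff₀ hx).1 hax
  have hβ : b ≤ β * y := (div_le_iff₀ hy).1 hby
  calc a * b ≤ (α * x) * (β * y) := mul_le_mul hα hβ hb (ha.trans hα)
    _ = α * β * (x * y) := by ring

theorem sum_le_mul_one_add_card_sub_one_mul {ι R : Type*} [Fintype ι] [CommRing R]
    [PartialOrder R] [IsOrderedRing R] (f : ι → R) (z : ι) (c : R)
    (h : ∀ i ≠ z, f i ≤ c * f z) :
    ∑ i, f i ≤ f z * (1 + ((Fintype.card ι : R) - 1) * c) := by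
  classical
  have hrest : ∑ i ∈ univ.erase z, f i ≤ ∑ _i ∈ univ.erase z, c * f z :=
    sum_le_sum fun i hi => h i (ne_of_mem_erase hi)
  have hcard : 1 ≤ Fintype.card ι := Fintype.card_pos_iff.mpr ⟨z⟩
  rw [← add_sum_erase _ _ (mem_univ z)]
  rw [sum_const, card_erase_of_mem (mem_univ z), card_univ, nsmul_eq_mul,
    Nat.cast_sub hcard, Nat.cast_one] at hrest
  linear_combination hrest

theorem inv_one_add_card_sub_one_mul_le_div_sum {ι R : Type*} [Fintype ι] [Field R]
    [LinearOrder R] [IsStrictOrderedRing R] (f : ι → R) (z : ι) (c : R) (hf : ∀ i, 0 ≤ f i) (hz : 0 < f z) (h : ∀ i ≠ z, f i ≤ c * f z) :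
    (1 + ((Fintype.card ι : R) - 1) * c)⁻¹ ≤ f z / ∑ i, f i := by
  set D := 1 + ((Fintype.card ι : R) - 1) * c
  have hsum : ∑ i, f i ≤ f z * D := sum_le_mul_one_add_card_sub_one_mul f z c h
  have hsum_pos : 0 < ∑ i, f i :=
    hz.trans_le (single_le_sum (fun i _ => hf i) (mem_univ z))
  have hD : 0 < D := pos_of_mul_pos_right (hsum_pos.trans_le hsum) hz.le
  calc D⁻¹ = f z / (f z * D) := by field_simp
    _ ≤ f z / ∑ i, f i := div_le_div_of_nonneg_left hz.le hsum_pos hsum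

theorem stmt3_general {𝒵 : Type*} [Fintype 𝒵]
    (K : ℕ) (hK : Fintype.card 𝒵 = K) (z : 𝒵)
    (pZ : 𝒵 → ℝ) (hpZ : ∀ z', 0 < pZ z')
    (q0 q1 : 𝒵 → ℝ) (hq0 : ∀ z', 0 ≤ q0 z') (hq1 : ∀ z', 0 ≤ q1 z')
    (hq0z : 0 < q0 z) (hq1z : 0 < q1 z)
    (σ η G ζ : ℝ)
    (hr : ∀ z' ≠ z, pZ z' * q1 z' / (pZ z * q1 z) ≤ σ⁻¹ - 1)
    (h0 : ∀ z' ≠ z, q0 z' / q0 z ≤ G * ((1 - ζ)⁻¹ - 1))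
    (hζ : (σ⁻¹ - 1) * ((K : ℝ) - 1) * G * ((1 - ζ)⁻¹ - 1) = (1 - η/2)⁻¹ - 1) :
    1 - η/2 ≤ pZ z * q0 z * q1 z / ∑ z', pZ z' * q0 z' * q1 z' := by
  set c := (σ⁻¹ - 1) * (G * ((1 - ζ)⁻¹ - 1)) with hc
  have hpq1z : 0 < pZ z * q1 z := mul_pos (hpZ z) hq1z
  have hdominates : ∀ z' ≠ z, pZ z' * q0 z' * q1 z' ≤ c * (pZ z * q0 z * q1 z) := by
    intro z' hz'
    have hprod := mul_le_mul_mul_of_div_le_of_div_le (mul_nonneg (hpZ z').le (hq1 z'))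
      (hq0 z') hpq1z hq0z (hr z' hz') (h0 z' hz')
    linear_combination hprod
  have hshare : 1 + ((K : ℝ) - 1) * c = (1 - η/2)⁻¹ := by
    rw [hc]; linear_combination hζ
  calc 1 - η/2 = (1 + ((Fintype.card 𝒵 : ℝ) - 1) * c)⁻¹ := by rw [hK, hshare, inv_inv]
    _ ≤ _ := inv_one_add_card_sub_one_mul_le_div_sum _ z c
        (fun z' => mul_nonneg (mul_nonneg (hpZ z').le (hq0 z')) (hq1 z'))
        (mul_pos (mul_pos (hpZ z) hq0z) hq1z) hdominates

/-- Under the conditional i.i.d. factorization p(X₀=δ, X=x | Z=z') = p(X₀=δ|Z=z')·p(X=x|Z=z'),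
if r(x) = max_{z'≠z} [pZ z' · q₁ z'] / [pZ z · q₁ z] ≤ σ⁻¹ - 1 and each trigger likelihood
ratio q₀ z' / q₀ z ≤ G·((1-ζ)⁻¹ - 1), with ζ chosen so that
(σ⁻¹-1)(K-1)G((1-ζ)⁻¹-1) = (1-η/2)⁻¹-1, then the posterior
p(Z=z | X₀=δ, X=x) = pZ z · q₀ z · q₁ z / ∑ z', pZ z' · q₀ z' · q₁ z' is at least 1-η/2. -/
theorem stmt3 {𝒵 : Type*} [Fintype 𝒵] [DecidableEq 𝒵]
    (K : ℕ) (hK : Fintype.card 𝒵 = K) (z : 𝒵)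
    (pZ : 𝒵 → ℝ) (hpZ : ∀ z', 0 < pZ z') (hpZsum : ∑ z', pZ z' = 1)
    (q0 q1 : 𝒵 → ℝ) (hq0 : ∀ z', 0 ≤ q0 z') (hq1 : ∀ z', 0 ≤ q1 z')
    (hq0z : 0 < q0 z) (hq1z : 0 < q1 z)
    (σ η G ζ : ℝ) (hσ : 0 < σ) (hσ1 : σ < 1) (hη : 0 < η) (hη1 : η < 1)
    (hG : 0 < G) (hζ0 : 0 < ζ) (hζ1 : ζ < 1)
    (hr : ∀ z' ≠ z, pZ z' * q1 z' / (pZ z * q1 z) ≤ σ⁻¹ - 1)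
    (h0 : ∀ z' ≠ z, q0 z' / q0 z ≤ G * ((1 - ζ)⁻¹ - 1))
    (hζ : (σ⁻¹ - 1) * ((K : ℝ) - 1) * G * ((1 - ζ)⁻¹ - 1) = (1 - η/2)⁻¹ - 1) :
    1 - η/2 ≤ pZ z * q0 z * q1 z / ∑ z', pZ z' * q0 z' * q1 z' :=
  stmt3_general K hK z pZ hpZ q0 q1 hq0 hq1 hq0z hq1z σ η G ζ hr h0 hζ
end

section
/- If a sequence of triggers δ_n satisfies p(Z=z|X_0=δ_n) → 1, and X_0 is conditionally independent of X_1 given Z, and for all x outside a set B with p(X_1∈B) ≤ ε the ratio r(x) = max_{z'≠z}[p(Z=z')p(X_1=x|Z=z')]/[p(Z=z)p(X_1=x|Z=z)] is bounded by σ^{-1}-1, then liminf_n p(X_1 ∈ {x : p(Z=z|X_0=δ_n, X_1=x) ≥ 1-η}) ≥ 1-ε for every η satisfying (1-η/2)^{-1} > 1 + (σ^{-1}-1)(K-1)·max_{z'≠z}p(Z=z)/p(Z=z')·ω_n with ω_n = max_{z'≠z} p(X_0=δ_n|Z=z')/p(X_0=δ_n|Z=z) → 0. -/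
/-!
For `x ∉ B` every competing class `w ≠ z` has joint weight
`p(Z=w, X₀=δₙ, X₁=x) ≤ (σ⁻¹ - 1) ωₙ p(Z=z, X₀=δₙ, X₁=x)`, so the posterior of `z` given
`(δₙ, x)` is at least `1 - η` as soon as `(1 - η)(K - 1)(σ⁻¹ - 1) ωₙ ≤ η`, which holds for all
large `n` because `ωₙ → 0`. From then on every `x ∉ B` of positive mass lies in the
high-posterior set, whose mass is therefore at least `1 - p(X₁ ∈ B) ≥ 1 - ε`.
-/

open Finset Filter

theorem sum_sum_mul_eq_one {ι α : Type*} [Fintype ι] [Fintype α] {p : ι → ℝ} {q : ι → α → ℝ}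
    (hp : ∑ w, p w = 1) (hq : ∀ w, ∑ x, q w x = 1) :
    ∑ x, ∑ w, p w * q w x = 1 := by
  rw [Finset.sum_comm]
  simp only [← Finset.mul_sum, hq, mul_one, hp]

theorem one_sub_le_sum_indicator {α : Type*} [Fintype α] {f : α → ℝ} {B : Finset α}
    {S : Set α} {ε : ℝ} (hf : ∀ x, 0 ≤ f x) (hsum : ∑ x, f x = 1)
    (hB : ∑ x ∈ B, f x ≤ ε) (hS : ∀ x ∉ B, 0 < f x → x ∈ S) :
    1 - ε ≤ ∑ x, S.indicator f x := by
  have hpoint : ∀ x, f x ≤ S.indicator f x + (B : Set α).indicator f x := by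
    intro x
    have hSx := Set.indicator_nonneg (fun y _ => hf y) x (s := S)
    by_cases hxB : x ∈ B
    · rw [Set.indicator_of_mem (s := (B : Set α)) (by simpa using hxB)]
      linarith
    · rw [Set.indicator_of_notMem (s := (B : Set α)) (by simpa using hxB), add_zero]
      rcases (hf x).lt_or_eq with hfx | hfx
      · rw [Set.indicator_of_mem (hS x hxB hfx)]
      · rwa [← hfx]
  have hsplit := Finset.sum_le_sum fun x (_ : x ∈ univ) => hpoint x
  rw [Finset.sum_add_distrib, hsum, Finset.sum_indicator_subset f (subset_univ B)] at hsplit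
  linarith

theorem pos_of_sum_mul_pos {ι : Type*} [Fintype ι] {p q : ι → ℝ} {z : ι} {r : ℝ}
    (hq : ∀ w, 0 ≤ q w) (hr : ∀ w ≠ z, p w * q w ≤ r * (p z * q z))
    (hpos : 0 < ∑ w, p w * q w) : 0 < q z := by
  refine (hq z).lt_of_ne fun hqz => hpos.not_ge (Finset.sum_nonpos fun w _ => ?_)
  rcases eq_or_ne w z with rfl | hwz
  · simp [← hqz]
  · simpa [← hqz] using hr w hwz

section Posterior

variable {ι : Type*} [Fintype ι] [DecidableEq ι]

theorem one_sub_le_div_sum {v : ι → ℝ} {z : ι} {C η : ℝ} (hv : ∀ w, 0 ≤ v w) (hz : 0 < v z)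
    (hrest : ∑ w ∈ univ.erase z, v w ≤ C * v z) (hη1 : η < 1) (hC : (1 - η) * C ≤ η) :
    1 - η ≤ v z / ∑ w, v w := by
  have hrest0 : 0 ≤ ∑ w ∈ univ.erase z, v w := Finset.sum_nonneg fun w _ => hv w
  rw [← Finset.sum_erase_add _ _ (mem_univ z), le_div_iff₀ (by linarith)]
  nlinarith [mul_le_mul_of_nonneg_left hrest (sub_nonneg.mpr hη1.le)]

theorem one_sub_le_posterior {p a q : ι → ℝ} {z : ι} {r ω η : ℝ}
    (hp : ∀ w, 0 < p w) (ha : ∀ w, 0 < a w) (hq : ∀ w, 0 ≤ q w) (hqz : 0 < q z)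
    (hr : ∀ w ≠ z, p w * q w ≤ r * (p z * q z)) (hω : ∀ w ≠ z, a w ≤ ω * a z)
    (hη1 : η < 1) (hsmall : (1 - η) * ((univ.erase z).card * r * ω) ≤ η) :
    1 - η ≤ p z * (a z * q z) / ∑ w, p w * (a w * q w) := by
  have hterm : ∀ w ∈ univ.erase z, p w * (a w * q w) ≤ r * ω * (p z * (a z * q z)) := by
    intro w hw
    have hwz := ne_of_mem_erase hw
    calc p w * (a w * q w) = (p w * q w) * a w := by ring
      _ ≤ (p w * q w) * (ω * a z) :=
          mul_le_mul_of_nonneg_left (hω w hwz) (mul_nonneg (hp w).le (hq w))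
      _ ≤ r * (p z * q z) * (ω * a z) :=
          mul_le_mul_of_nonneg_right (hr w hwz) ((ha w).le.trans (hω w hwz))
      _ = r * ω * (p z * (a z * q z)) := by ring
  refine one_sub_le_div_sum (fun w => mul_nonneg (hp w).le (mul_nonneg (ha w).le (hq w)))
    (mul_pos (hp z) (mul_pos (ha z) hqz)) ?_ hη1 hsmall
  calc ∑ w ∈ univ.erase z, p w * (a w * q w)
      ≤ ∑ _w ∈ univ.erase z, r * ω * (p z * (a z * q z)) := Finset.sum_le_sum hterm
    _ = (univ.erase z).card * r * ω * (p z * (a z * q z)) := by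
        rw [Finset.sum_const, nsmul_eq_mul]; ring

end Posterior

theorem stmt18_general {𝒵 𝒳 : Type*} [Fintype 𝒵] [DecidableEq 𝒵] [Fintype 𝒳]
    (z : 𝒵) (hne : (Finset.univ.erase z).Nonempty)
    (pZ : 𝒵 → ℝ) (hpZ : ∀ w, 0 < pZ w) (hpZsum : ∑ w, pZ w = 1)
    (q : 𝒵 → 𝒳 → ℝ) (hq : ∀ w x, 0 ≤ q w x) (hqsum : ∀ w, ∑ x, q w x = 1)
    (a : ℕ → 𝒵 → ℝ) (ha : ∀ n w, 0 < a n w)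
    (σ ε η : ℝ) (hη : 0 < η) (hη1 : η < 1)
    (B : Finset 𝒳) (hB : ∑ x ∈ B, (∑ w, pZ w * q w x) ≤ ε)
    (hr : ∀ x ∉ B, ∀ w ≠ z, pZ w * q w x ≤ (σ⁻¹ - 1) * (pZ z * q z x))
    (hω : Tendsto (fun n => (Finset.univ.erase z).sup' hne fun w => a n w / a n z)
      atTop (nhds 0)) :
    1 - ε ≤ liminf (fun n =>
        ∑ x, Set.indicator
          {x : 𝒳 | 1 - η ≤ pZ z * (a n z * q z x) / ∑ w, pZ w * (a n w * q w x)}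
          (fun x => ∑ w, pZ w * q w x) x)
      atTop := by
  set ω := fun n => (univ.erase z).sup' hne fun w => a n w / a n z
  have hf0 : ∀ x, 0 ≤ ∑ w, pZ w * q w x := fun x =>
    Finset.sum_nonneg fun w _ => mul_nonneg (hpZ w).le (hq w x)
  have hfsum := sum_sum_mul_eq_one hpZsum hqsum
  have hωle : ∀ n, ∀ w ≠ z, a n w ≤ ω n * a n z := fun n w hwz =>
    (div_le_iff₀ (ha n z)).mp <|
      le_sup' (fun w => a n w / a n z) (mem_erase.mpr ⟨hwz, mem_univ w⟩)
  have hsmall : ∀ᶠ n in atTop, (1 - η) * ((univ.erase z).card * (σ⁻¹ - 1) * ω n) ≤ η := by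
    have hlim := (hω.const_mul ((univ.erase z).card * (σ⁻¹ - 1))).const_mul (1 - η)
    simp only [mul_zero] at hlim
    exact hlim.eventually_le_const hη
  refine le_liminf_of_le (isCoboundedUnder_ge_of_le atTop (x := 1) fun n =>
    (Finset.sum_le_sum fun x _ => Set.indicator_le_self' (fun y _ => hf0 y) x).trans hfsum.le) ?_
  filter_upwards [hsmall] with n hn
  refine one_sub_le_sum_indicator hf0 hfsum hB fun x hx hpos => ?_
  have hqz := pos_of_sum_mul_pos (q := fun w => q w x) (fun w => hq w x) (hr x hx) hpos
  exact one_sub_le_posterior hpZ (ha n) (fun w => hq w x) hqz (hr x hx) (hωle n) hη1 hn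

/-- If p(Z=z|X₀=δₙ) → 1 (equivalently the likelihood-ratio bound ωₙ → 0), X₀ ⊥ X₁ | Z,
and outside a set B with p(X₁ ∈ B) ≤ ε the ratio r(x) is bounded by σ⁻¹-1, then
liminfₙ p(X₁ ∈ {x : p(Z=z|X₀=δₙ, X₁=x) ≥ 1-η}) ≥ 1-ε, for η satisfying
(1-η/2)⁻¹ > 1 + (σ⁻¹-1)(K-1)·G·ωₙ.  Here `pZ` is the prior, `q w x = p(X₁=x|Z=w)`,
`a n w = p(X₀=δₙ|Z=w)`, p(X₁=x) = ∑ w, pZ w · q w x, and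
p(Z=z|X₀=δₙ,X₁=x) = pZ z · a n z · q z x / ∑ w, pZ w · a n w · q w x by Bayes. -/
theorem stmt18 {𝒵 𝒳 : Type*} [Fintype 𝒵] [DecidableEq 𝒵] [Fintype 𝒳]
    (K : ℕ) (hK : Fintype.card 𝒵 = K)
    (z : 𝒵) (hne : (Finset.univ.erase z).Nonempty)
    (pZ : 𝒵 → ℝ) (hpZ : ∀ w, 0 < pZ w) (hpZsum : ∑ w, pZ w = 1)
    (q : 𝒵 → 𝒳 → ℝ) (hq : ∀ w x, 0 ≤ q w x) (hqsum : ∀ w, ∑ x, q w x = 1)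
    (a : ℕ → 𝒵 → ℝ) (ha : ∀ n w, 0 < a n w)
    (σ ε η G : ℝ) (hσ : 0 < σ) (hσ1 : σ < 1) (hε : 0 < ε) (hη : 0 < η) (hη1 : η < 1)
    (hG : G = (Finset.univ.erase z).sup' hne fun w => pZ z / pZ w)
    (B : Finset 𝒳) (hB : ∑ x ∈ B, (∑ w, pZ w * q w x) ≤ ε)
    (hr : ∀ x ∉ B, ∀ w ≠ z, pZ w * q w x ≤ (σ⁻¹ - 1) * (pZ z * q z x))
    (hpost1 : Tendsto (fun n => pZ z * a n z / ∑ w, pZ w * a n w) atTop (nhds 1))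
    (hω : Tendsto (fun n => (Finset.univ.erase z).sup' hne fun w => a n w / a n z)
      atTop (nhds 0))
    (hηn : ∀ n, 1 + (σ⁻¹ - 1) * ((K : ℝ) - 1) * G
        * ((Finset.univ.erase z).sup' hne fun w => a n w / a n z) < (1 - η/2)⁻¹) :
    1 - ε ≤ liminf (fun n =>
        ∑ x, Set.indicator
          {x : 𝒳 | 1 - η ≤ pZ z * (a n z * q z x) / ∑ w, pZ w * (a n w * q w x)}
          (fun x => ∑ w, pZ w * q w x) x)
      atTop :=
  stmt18_general z hne pZ hpZ hpZsum q hq hqsum a ha σ ε η hη hη1 B hB hr hω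
end
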